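/- As α → ∞, H₁(α, α + 3π/2) = H₁(α,α) · (1 + o(1)); that is, lim_{α→∞} H₁(α, α + 3π/2) / H₁(α,α) = 1, where H₁(α,x) = ∫₀^∞ (t^α / sinh t) · x/(x² + t²) dt. -/

import Mathlib

open MeasureTheory Filter Real

/-!
For `0 < x ≤ y` the kernels compare pointwise as
`(x / y) · x/(x²+t²) ≤ y/(y²+t²) ≤ (y / x) · x/(x²+t²)`, and the weight `t^α / sinh t` is
positive, so `x / y ≤ H₁(α,y) / H₁(α,x) ≤ y / x`. With `x = α`, `y = α + 3π/2` both bounds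
tend to `1`.
-/

/-- `H₁(α,x) = ∫₀^∞ (t^α / sinh t) · x/(x²+t²) dt`. -/
noncomputable def H1fun (α x : ℝ) : ℝ :=
  ∫ t in Set.Ioi (0:ℝ), t ^ α / Real.sinh t * (x / (x ^ 2 + t ^ 2))

lemma mul_exp_le_one_add_two_mul_mul_sinh {t : ℝ} (ht : 0 ≤ t) :
    t * exp t ≤ (1 + 2 * t) * sinh t := by
  have h2t : 1 + 2 * t ≤ exp t * exp t := by
    rw [← exp_add, ← two_mul]; linarith [add_one_le_exp (2 * t)]
  have hinv : exp (-t) * exp t = 1 := by rw [← exp_add]; simp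
  rw [sinh_eq]
  nlinarith [mul_nonneg (exp_pos (-t)).le ht, exp_pos (-t)]

/-- The weight is dominated by the Gamma integrands of `α` and `α + 1`. -/
lemma rpow_div_sinh_le (α : ℝ) {t : ℝ} (ht : 0 < t) :
    t ^ α / sinh t ≤ exp (-t) * t ^ (α - 1) + 2 * (exp (-t) * t ^ α) := by
  have hsinh : t * exp t / (1 + 2 * t) ≤ sinh t := by
    rw [div_le_iff₀ (by linarith)]
    linarith [mul_exp_le_one_add_two_mul_mul_sinh ht.le]
  calc t ^ α / sinh t ≤ t ^ α / (t * exp t / (1 + 2 * t)) :=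
        div_le_div_of_nonneg_left (by positivity) (by positivity) hsinh
    _ = exp (-t) * t ^ (α - 1) + 2 * (exp (-t) * t ^ α) := by
        rw [rpow_sub ht, rpow_one, exp_neg]
        field_simp

lemma integrableOn_rpow_div_sinh {α : ℝ} (hα : 0 < α) :
    IntegrableOn (fun t : ℝ => t ^ α / sinh t) (Set.Ioi 0) := by
  have hdom : IntegrableOn (fun t : ℝ => exp (-t) * t ^ (α - 1) + 2 * (exp (-t) * t ^ α))
      (Set.Ioi 0) := by
    have hΓ := GammaIntegral_convergent (show 0 < α + 1 by linarith)
    simp only [add_sub_cancel_right] at hΓ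
    exact (GammaIntegral_convergent hα).add (hΓ.const_mul 2)
  refine hdom.mono' (by fun_prop : Measurable fun t : ℝ => t ^ α / sinh t).aestronglyMeasurable ?_
  filter_upwards [ae_restrict_mem measurableSet_Ioi] with t (ht : 0 < t)
  rw [norm_of_nonneg (div_nonneg (rpow_nonneg ht.le α) (sinh_pos_iff.mpr ht).le)]
  exact rpow_div_sinh_le α ht

lemma abs_div_sq_add_sq_le (x t : ℝ) : |x / (x ^ 2 + t ^ 2)| ≤ |x|⁻¹ := by
  rcases eq_or_ne x 0 with rfl | hx
  · simp
  rw [abs_div, abs_of_pos (by positivity : 0 < x ^ 2 + t ^ 2), div_le_iff₀ (by positivity),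
    ← sq_abs x]
  field_simp
  nlinarith [sq_nonneg t]

lemma integrableOn_H1fun_integrand {α : ℝ} (hα : 0 < α) (x : ℝ) :
    IntegrableOn (fun t : ℝ => t ^ α / sinh t * (x / (x ^ 2 + t ^ 2))) (Set.Ioi 0) :=
  (integrableOn_rpow_div_sinh hα).mul_bdd (by fun_prop : Measurable _).aestronglyMeasurable
    (ae_of_all _ fun t => by simpa only [norm_eq_abs] using abs_div_sq_add_sq_le x t)

lemma H1fun_pos {α x : ℝ} (hα : 0 < α) (hx : 0 < x) : 0 < H1fun α x := by
  have hpos : ∀ t ∈ Set.Ioi (0 : ℝ), 0 < t ^ α / sinh t * (x / (x ^ 2 + t ^ 2)) :=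
    fun t (ht : 0 < t) => by have := sinh_pos_iff.mpr ht; positivity
  rw [H1fun, setIntegral_pos_iff_support_of_nonneg_ae
    ((ae_restrict_mem measurableSet_Ioi).mono fun t ht => (hpos t ht).le)
    (integrableOn_H1fun_integrand hα x),
    Set.inter_eq_right.mpr fun t ht => Function.mem_support.mpr (hpos t ht).ne']
  simp

lemma div_mul_div_sq_add_sq_le {x y : ℝ} (hx : 0 < x) (hxy : x ≤ y) (t : ℝ) :
    x / y * (x / (x ^ 2 + t ^ 2)) ≤ y / (y ^ 2 + t ^ 2) := by
  have hy : 0 < y := hx.trans_le hxy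
  rw [div_mul_div_comm, div_le_div_iff₀ (by positivity) (by positivity)]
  nlinarith [mul_nonneg (sub_nonneg.mpr (mul_le_mul hxy hxy hx.le hy.le)) (sq_nonneg t)]

lemma div_sq_add_sq_le_div_mul {x y : ℝ} (hx : 0 < x) (hxy : x ≤ y) (t : ℝ) :
    y / (y ^ 2 + t ^ 2) ≤ y / x * (x / (x ^ 2 + t ^ 2)) := by
  have hy : 0 < y := hx.trans_le hxy
  rw [div_mul_div_cancel₀ hx.ne']
  gcongr

lemma div_mul_H1fun_le {α x y : ℝ} (hα : 0 < α) (hx : 0 < x) (hxy : x ≤ y) :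
    x / y * H1fun α x ≤ H1fun α y := by
  rw [H1fun, H1fun, ← integral_const_mul]
  refine setIntegral_mono_on ((integrableOn_H1fun_integrand hα x).const_mul _)
    (integrableOn_H1fun_integrand hα y) measurableSet_Ioi fun t (ht : 0 < t) => ?_
  have := sinh_pos_iff.mpr ht
  calc x / y * (t ^ α / sinh t * (x / (x ^ 2 + t ^ 2)))
      = t ^ α / sinh t * (x / y * (x / (x ^ 2 + t ^ 2))) := by ring
    _ ≤ t ^ α / sinh t * (y / (y ^ 2 + t ^ 2)) := by
      gcongr; exact div_mul_div_sq_add_sq_le hx hxy t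

lemma H1fun_le_div_mul {α x y : ℝ} (hα : 0 < α) (hx : 0 < x) (hxy : x ≤ y) :
    H1fun α y ≤ y / x * H1fun α x := by
  rw [H1fun, H1fun, ← integral_const_mul]
  refine setIntegral_mono_on (integrableOn_H1fun_integrand hα y)
    ((integrableOn_H1fun_integrand hα x).const_mul _) measurableSet_Ioi fun t (ht : 0 < t) => ?_
  have := sinh_pos_iff.mpr ht
  calc t ^ α / sinh t * (y / (y ^ 2 + t ^ 2))
      ≤ t ^ α / sinh t * (y / x * (x / (x ^ 2 + t ^ 2))) := by
        gcongr; exact div_sq_add_sq_le_div_mul hx hxy t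
    _ = y / x * (t ^ α / sinh t * (x / (x ^ 2 + t ^ 2))) := by ring

lemma tendsto_add_const_div_self_atTop (c : ℝ) :
    Tendsto (fun x : ℝ => (x + c) / x) atTop (nhds 1) := by
  have h : Tendsto (fun x : ℝ => 1 + c / x) atTop (nhds 1) := by
    simpa using tendsto_const_nhds.add ((tendsto_const_nhds (x := c)).div_atTop tendsto_id)
  refine h.congr' ?_
  filter_upwards [eventually_ne_atTop 0] with x hx
  field_simp

theorem stmt_19 :
    Tendsto (fun α : ℝ => H1fun α (α + 3 * Real.pi / 2) / H1fun α α)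
      atTop (nhds 1) := by
  set c : ℝ := 3 * Real.pi / 2
  have hc : 0 < c := by positivity
  have hupper := tendsto_add_const_div_self_atTop c
  have hlower : Tendsto (fun α : ℝ => α / (α + c)) atTop (nhds 1) := by
    simpa only [inv_div, inv_one] using hupper.inv₀ one_ne_zero
  refine tendsto_of_tendsto_of_tendsto_of_le_of_le' hlower hupper ?_ ?_ <;>
    filter_upwards [eventually_gt_atTop 0] with α hα
  · rw [le_div_iff₀ (H1fun_pos hα hα)]
    exact div_mul_H1fun_le hα hα (by linarith)
  · rw [div_le_iff₀ (H1fun_pos hα hα)]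
    exact H1fun_le_div_mul hα hα (by linarith)
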